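/- Let N be a natural number and set τ3 = −2N − 2 − α − β in the degenerate first-order operator M. Then for every 0 ≤ n ≤ N, the polynomial ψ_n(x) = x^n(1−x)^{N−n} satisfies M ψ_n = (τ0 − 2n − α − 1)·ψ_n in ℝ[x]. -/
import Mathlib


open Polynomial

/-- The degenerate (τ1 = 1, τ2 = -1) tridiagonalized operator, a first-order
differential operator: `(M p)(x) = 2x(x-1)p'(x) + ((α+β+τ3+2)x + τ0 - α - 1)p(x)`. -/
noncomputable def Mdeg (α β τ0 τ3 : ℝ) (p : ℝ[X]) : ℝ[X] :=
  C 2 * (X * (X - 1)) * derivative p + (C (α + β + τ3 + 2) * X + C (τ0 - α - 1)) * p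

/-- With `τ3 = -2N-2-α-β`, the polynomials `ψ_n(x) = x^n(1-x)^{N-n}` are eigenfunctions
of the degenerate operator `M` with eigenvalues `τ0 - 2n - α - 1`. -/
theorem Mdeg_eigenfunctions (α β τ0 : ℝ) (N : ℕ) :
    ∀ n : ℕ, n ≤ N →
      Mdeg α β τ0 (-2 * (N : ℝ) - 2 - α - β) (X ^ n * (1 - X) ^ (N - n)) =
        (τ0 - 2 * (n : ℝ) - α - 1) • (X ^ n * (1 - X) ^ (N - n)) := by
  intro n hn
  obtain ⟨m, rfl⟩ : ∃ m, N = n + m := ⟨N - n, (Nat.add_sub_cancel' hn).symm⟩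
  have h : n + m - n = m := by omega
  rw [h]
  unfold Mdeg
  rw [smul_eq_C_mul]
  rcases n with _ | n <;> rcases m with _ | m <;>
    simp only [derivative_mul, derivative_pow, derivative_sub, derivative_one, derivative_X,
      Nat.add_sub_cancel, pow_zero, Nat.cast_add, Nat.cast_one, Nat.cast_zero, Nat.cast_ofNat,
      map_add, map_sub, map_neg, map_mul, map_one, map_ofNat, map_natCast, mul_one,
      mul_zero, zero_mul, add_zero, zero_add, zero_sub, sub_zero] <;>
    push_cast <;> ring
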